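/- arXiv:math/0408221 — 2 statements merged into one kernel-verified Lean document; each statement's English description precedes it below -/
import Mathlib

section
/- Let N be an odd positive integer, k an integer, a₂ ∈ ℂ, n ≥ 1 an integer, and α, β odd integers with 2^n ∣ αβN + 1. Let f : ℍ → ℂ satisfy Pairing Assumption 1, together with f ∣[k] T = f, f ∣[k] W_N = f, f ∣[k] M₂ = f where M₂ = [[2,−1],[−N,(N+1)/2]], f ∣[k] [[2,0],[0,1]] + f ∣[k] [[1,0],[0,2]] + f ∣[k] [[1,1],[0,2]] = a₂ • f, f ∣[k] [[2^{n−1}, α],[βN, (αβN+1)/2^{n−1}]] = f, and f ∣[k] [[2^n, α],[βN, (αβN+1)/2^n]] = f. Then either f ∣[k] γ = f for both matrices γ of the pair P₁, or f ∣[k] γ = f for both matrices γ of the pair P₂ (the matrices of P₁ and P₂ regarded as rational matrices with positive determinant). -/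
/-!
Slash the `T₂`-relation `f ∣ δ₁ + f ∣ δ₂ + f ∣ δ₃ = a₂ • f` (with `δ₁ = [[2,0],[0,1]]`,
`δ₂ = [[1,0],[0,2]]`, `δ₃ = [[1,1],[0,2]]`) by `Mₙ`, which fixes `f`. Since `δ₂ Mₙ = Mₙ₋₁ δ₁` and
`Mₙ₋₁` fixes `f`, this leaves `f ∣ δ₁Mₙ + f ∣ δ₃Mₙ = f ∣ δ₂ + f ∣ δ₃`. The pairing assumption
matches the two sides in one of two ways, and the identities `δ₁Mₙ = P₁ₐδ₂ = P₂ₐδ₃` and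
`M₂δ₃Mₙ = P₁ᵦδ₃ = P₂ᵦδ₂`, with `M₂` fixing `f`, turn either matching into invariance of `f` under
one of the pairs.
-/

open Matrix UpperHalfPlane Complex
open scoped ModularForm MatrixGroups

/-- The element of `GL(2, ℝ)⁺` with entries `[[a, b], [c, d]]` and positive determinant. -/
noncomputable def glp (a b c d : ℝ) (h : 0 < a * d - b * c) : GL(2, ℝ)⁺ :=
  ⟨Matrix.GeneralLinearGroup.mkOfDetNeZero !![a, b; c, d]
      (by rw [Matrix.det_fin_two_of]; exact ne_of_gt h),
   by
    rw [Matrix.mem_glpos]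
    show (0:ℝ) < ((Matrix.GeneralLinearGroup.det _ : ℝˣ) : ℝ)
    rw [Matrix.GeneralLinearGroup.val_det_apply]
    show (0:ℝ) < Matrix.det !![a, b; c, d]
    rw [Matrix.det_fin_two_of]; exact h⟩

noncomputable instance glposSlashAction : SlashAction ℤ GL(2, ℝ)⁺ (ℍ → ℂ) :=
  monoidHomSlashAction (Subgroup.subtype _)

lemma det_pos_of_eq_one {a b c d : ℝ} (h : a * d - b * c = 1) : 0 < a * d - b * c := by
  rw [h]; norm_num

namespace SlashAction

variable {β G α : Type*} [Group G] [AddMonoid α] [SlashAction β G α] {k : β} {a : α}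

theorem slash_left_injective (k : β) (g : G) : Function.Injective fun a : α ↦ a ∣[k] g :=
  fun a b h ↦ by simpa [← slash_mul] using congrArg (· ∣[k] g⁻¹) h

theorem slash_mul_of_slash_eq_self {g : G} (h : a ∣[k] g = a) (x : G) :
    a ∣[k] (g * x) = a ∣[k] x := by
  rw [slash_mul, h]

theorem slash_eq_self_of_slash_mul_eq {g x : G} (h : a ∣[k] (g * x) = a ∣[k] x) :
    a ∣[k] g = a :=
  slash_left_injective k x (show (a ∣[k] g) ∣[k] x = a ∣[k] x by rwa [← slash_mul])

end SlashAction

open SlashAction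

theorem glpos_smul_slash (k : ℤ) (g : GL(2, ℝ)⁺) (f : ℍ → ℂ) (c : ℂ) :
    (c • f) ∣[k] g = c • f ∣[k] g := by
  change (c • f) ∣[k] (g : GL (Fin 2) ℝ) = c • f ∣[k] (g : GL (Fin 2) ℝ)
  have hg : 0 < ((g : GL (Fin 2) ℝ) : Matrix (Fin 2) (Fin 2) ℝ).det := (mem_glpos _).mp g.2
  simp [ModularForm.smul_slash, σ, hg]

theorem slash_mul_add_eq_of_eq_smul {k : ℤ} {f : ℍ → ℂ} {c : ℂ} {A B C M : GL(2, ℝ)⁺}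
    (hM : f ∣[k] M = f) (h : f ∣[k] A + f ∣[k] B + f ∣[k] C = c • f) :
    f ∣[k] (A * M) + f ∣[k] (B * M) + f ∣[k] (C * M) = f ∣[k] A + f ∣[k] B + f ∣[k] C := by
  simp only [slash_mul, ← add_slash, h, glpos_smul_slash, hM]

theorem glp_mul {a b c d a' b' c' d' : ℝ} (h : 0 < a * d - b * c) (h' : 0 < a' * d' - b' * c') :
    glp a b c d h * glp a' b' c' d' h' =
      glp (a * a' + b * c') (a * b' + b * d') (c * a' + d * c') (c * b' + d * d')
        (by nlinarith [mul_pos h h']) :=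
  Subtype.ext <| Units.ext <| Matrix.mul_fin_two a b c d a' b' c' d'

theorem glp_congr {a b c d a' b' c' d' : ℝ} {h : 0 < a * d - b * c}
    {h' : 0 < a' * d' - b' * c'} (ha : a = a') (hb : b = b') (hc : c = c') (hd : d = d') :
    glp a b c d h = glp a' b' c' d' h' := by
  subst ha hb hc hd
  rfl

def PairingAssumption (k : ℤ) (f : ℍ → ℂ) : Prop :=
  ∀ A B C D : GL(2, ℝ)⁺, f ∣[k] A + f ∣[k] B = f ∣[k] C + f ∣[k] D →
    (f ∣[k] A = f ∣[k] C ∧ f ∣[k] B = f ∣[k] D) ∨ (f ∣[k] A = f ∣[k] D ∧ f ∣[k] B = f ∣[k] C)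

/-- `Mₙ = twoPowMat n α β N`; the matrices of `P₁` and `P₂` are `twoPowMat (n + 1)` with `α` and/or
`β` replaced by `α - 2^n`, `β - 2^n`. -/
noncomputable def twoPowMat (n : ℕ) (a b N : ℝ) : GL(2, ℝ)⁺ :=
  glp (2 ^ n) a (b * N) ((a * b * N + 1) / 2 ^ n) (det_pos_of_eq_one (by field_simp; ring))

section twoPowMat

variable (n : ℕ) (a b N : ℝ)

theorem diag_one_two_mul_twoPowMat_succ :
    glp 1 0 0 2 (by norm_num) * twoPowMat (n + 1) a b N =
      twoPowMat n a b N * glp 2 0 0 1 (by norm_num) := by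
  unfold twoPowMat
  rw [glp_mul, glp_mul]
  exact glp_congr (by ring) (by ring) (by ring) (by field_simp; ring)

theorem diag_two_one_mul_twoPowMat :
    glp 2 0 0 1 (by norm_num) * twoPowMat n a b N =
      twoPowMat (n + 1) a b N * glp 1 0 0 2 (by norm_num) := by
  unfold twoPowMat
  rw [glp_mul, glp_mul]
  exact glp_congr (by ring) (by ring) (by ring) (by field_simp; ring)

theorem diag_two_one_mul_twoPowMat_eq_sub :
    glp 2 0 0 1 (by norm_num) * twoPowMat n a b N =
      twoPowMat (n + 1) (a - 2 ^ n) b N * glp 1 1 0 2 (by norm_num) := by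
  unfold twoPowMat
  rw [glp_mul, glp_mul]
  exact glp_congr (by ring) (by ring) (by ring) (by field_simp; ring)

theorem mTwo_mul_twoPowMat_eq_sub_sub :
    glp 2 (-1) (-N) ((N + 1) / 2) (det_pos_of_eq_one (by ring)) *
        (glp 1 1 0 2 (by norm_num) * twoPowMat n a b N) =
      twoPowMat (n + 1) (a - 2 ^ n) (b - 2 ^ n) N * glp 1 1 0 2 (by norm_num) := by
  unfold twoPowMat
  rw [glp_mul, glp_mul, glp_mul]
  exact glp_congr (by ring) (by field_simp; ring) (by field_simp; ring) (by field_simp; ring)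

theorem mTwo_mul_twoPowMat_eq_sub :
    glp 2 (-1) (-N) ((N + 1) / 2) (det_pos_of_eq_one (by ring)) *
        (glp 1 1 0 2 (by norm_num) * twoPowMat n a b N) =
      twoPowMat (n + 1) a (b - 2 ^ n) N * glp 1 0 0 2 (by norm_num) := by
  unfold twoPowMat
  rw [glp_mul, glp_mul, glp_mul]
  exact glp_congr (by ring) (by field_simp; ring) (by field_simp; ring) (by field_simp; ring)

end twoPowMat

theorem twoPowMat_pairs_of_hecke {k : ℤ} {f : ℍ → ℂ} {c : ℂ} (hPA : PairingAssumption k f)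
    (n : ℕ) (a b N : ℝ)
    (hM2 : f ∣[k] glp 2 (-1) (-N) ((N + 1) / 2) (det_pos_of_eq_one (by ring)) = f)
    (hT2 : f ∣[k] glp 2 0 0 1 (by norm_num) + f ∣[k] glp 1 0 0 2 (by norm_num)
        + f ∣[k] glp 1 1 0 2 (by norm_num) = c • f)
    (hMn : f ∣[k] twoPowMat n a b N = f) (hMsucc : f ∣[k] twoPowMat (n + 1) a b N = f) :
    (f ∣[k] twoPowMat (n + 2) a b N = f ∧
        f ∣[k] twoPowMat (n + 2) (a - 2 ^ (n + 1)) (b - 2 ^ (n + 1)) N = f) ∨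
      (f ∣[k] twoPowMat (n + 2) (a - 2 ^ (n + 1)) b N = f ∧
        f ∣[k] twoPowMat (n + 2) a (b - 2 ^ (n + 1)) N = f) := by
  have hsum : f ∣[k] (glp 2 0 0 1 (by norm_num) * twoPowMat (n + 1) a b N) +
      f ∣[k] (glp 1 1 0 2 (by norm_num) * twoPowMat (n + 1) a b N) =
      f ∣[k] glp 1 0 0 2 (by norm_num) + f ∣[k] glp 1 1 0 2 (by norm_num) := by
    have h := slash_mul_add_eq_of_eq_smul hMsucc hT2
    rw [diag_one_two_mul_twoPowMat_succ, slash_mul_of_slash_eq_self hMn] at h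
    linear_combination h
  rcases hPA _ _ _ _ hsum with ⟨h₁, h₃⟩ | ⟨h₁, h₃⟩
  · rw [diag_two_one_mul_twoPowMat] at h₁
    rw [← slash_mul_of_slash_eq_self hM2, mTwo_mul_twoPowMat_eq_sub_sub] at h₃
    exact .inl ⟨slash_eq_self_of_slash_mul_eq h₁, slash_eq_self_of_slash_mul_eq h₃⟩
  · rw [diag_two_one_mul_twoPowMat_eq_sub] at h₁
    rw [← slash_mul_of_slash_eq_self hM2, mTwo_mul_twoPowMat_eq_sub] at h₃
    exact .inr ⟨slash_eq_self_of_slash_mul_eq h₁, slash_eq_self_of_slash_mul_eq h₃⟩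

/-- Under Pairing Assumption 1 and the hypotheses of the process, the four remaining slashed terms
pair up so that either both matrices of the pair `P₁` or both matrices of the pair `P₂` leave `f`
invariant. -/
theorem slash_pairing_step (N : ℕ) (k : ℤ) (a₂ : ℂ)
    (n : ℕ) (hn : 1 ≤ n) (α β : ℤ) (f : ℍ → ℂ)
    (hPA1 : ∀ A B C D : GL(2, ℝ)⁺,
      f ∣[k] A + f ∣[k] B = f ∣[k] C + f ∣[k] D →
        (f ∣[k] A = f ∣[k] C ∧ f ∣[k] B = f ∣[k] D) ∨
        (f ∣[k] A = f ∣[k] D ∧ f ∣[k] B = f ∣[k] C))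
    (hM2 : f ∣[k] glp 2 (-1) (-(N:ℝ)) (((N:ℝ)+1)/2)
        (det_pos_of_eq_one (by ring)) = f)
    (hT2 : f ∣[k] glp 2 0 0 1 (by norm_num) + f ∣[k] glp 1 0 0 2 (by norm_num)
        + f ∣[k] glp 1 1 0 2 (by norm_num) = a₂ • f)
    (hMn1 : f ∣[k] glp ((2:ℝ)^(n-1)) (α:ℝ) ((β:ℝ)*(N:ℝ)) (((α:ℝ)*(β:ℝ)*(N:ℝ)+1)/(2:ℝ)^(n-1))
        (det_pos_of_eq_one (by
          have hne : ((2:ℝ)^(n-1)) ≠ 0 := by positivity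
          field_simp; ring)) = f)
    (hMn : f ∣[k] glp ((2:ℝ)^n) (α:ℝ) ((β:ℝ)*(N:ℝ)) (((α:ℝ)*(β:ℝ)*(N:ℝ)+1)/(2:ℝ)^n)
        (det_pos_of_eq_one (by
          have hne : ((2:ℝ)^n) ≠ 0 := by positivity
          field_simp; ring)) = f) :
    (f ∣[k] glp ((2:ℝ)^(n+1)) (α:ℝ) ((β:ℝ)*(N:ℝ)) (((α:ℝ)*(β:ℝ)*(N:ℝ)+1)/(2:ℝ)^(n+1))
        (det_pos_of_eq_one (by
          have hne : ((2:ℝ)^(n+1)) ≠ 0 := by positivity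
          field_simp; ring)) = f ∧
     f ∣[k] glp ((2:ℝ)^(n+1)) ((α:ℝ)-(2:ℝ)^n) (((β:ℝ)-(2:ℝ)^n)*(N:ℝ))
        ((((α:ℝ)-(2:ℝ)^n)*((β:ℝ)-(2:ℝ)^n)*(N:ℝ)+1)/(2:ℝ)^(n+1))
        (det_pos_of_eq_one (by
          have hne : ((2:ℝ)^(n+1)) ≠ 0 := by positivity
          field_simp; ring)) = f) ∨
    (f ∣[k] glp ((2:ℝ)^(n+1)) ((α:ℝ)-(2:ℝ)^n) ((β:ℝ)*(N:ℝ))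
        ((((α:ℝ)-(2:ℝ)^n)*(β:ℝ)*(N:ℝ)+1)/(2:ℝ)^(n+1))
        (det_pos_of_eq_one (by
          have hne : ((2:ℝ)^(n+1)) ≠ 0 := by positivity
          field_simp; ring)) = f ∧
     f ∣[k] glp ((2:ℝ)^(n+1)) (α:ℝ) (((β:ℝ)-(2:ℝ)^n)*(N:ℝ))
        (((α:ℝ)*((β:ℝ)-(2:ℝ)^n)*(N:ℝ)+1)/(2:ℝ)^(n+1))
        (det_pos_of_eq_one (by
          have hne : ((2:ℝ)^(n+1)) ≠ 0 := by positivity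
          field_simp; ring)) = f) := by
  obtain ⟨m, rfl⟩ : ∃ m, n = m + 1 := ⟨n - 1, by omega⟩
  exact twoPowMat_pairs_of_hecke hPA1 m α β N hM2 hT2 hMn1 hMn
end

section
/- For every positive integer N with N ≤ 4, the group Γ_0(N) is generated by the three matrices T = [[1,1],[0,1]], W_N = [[1,0],[N,1]], and −I. -/
open Matrix CongruenceSubgroup
open scoped MatrixGroups

/-- The matrix `T = [[1,1],[0,1]]` in `SL(2, ℤ)`. -/
def T : SL(2, ℤ) := ⟨!![1, 1; 0, 1], by norm_num [Matrix.det_fin_two_of]⟩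

/-- The matrix `W_N = [[1,0],[N,1]]` in `SL(2, ℤ)`. -/
def W (N : ℕ) : SL(2, ℤ) := ⟨!![1, 0; (N:ℤ), 1], by norm_num [Matrix.det_fin_two_of]⟩

/-- The matrix `-I` in `SL(2, ℤ)`. -/
def negI : SL(2, ℤ) := ⟨!![-1, 0; 0, -1], by norm_num [Matrix.det_fin_two_of]⟩

/-! Descent on the lower-left entry `c` of `g = [[a, b], [c, d]] ∈ Γ₀(N)`. Multiplying by a power
of `T` replaces `a` by a representative of `a mod c` with `2|a| ≤ |c|`, and then a power of `W_N`
replaces `c` by a representative of `c mod N a` with `2|c'| ≤ N|a| ≤ N|c|/2`. For `N ≤ 4` this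
strictly decreases `|c|` unless `N = 4` and `|c| = 2|a|`; then `a ∣ c` forces `a = ±1`, `|c| = 2`,
contradicting `4 ∣ c`. Once `c = 0`, `g = ±T^b`. For `N = 1` the reduction can stall at `a = 0`, but
there `Γ₀(1) = SL(2, ℤ)` is generated by `T` and `S = T⁻¹ W₁ T⁻¹`. -/

open Matrix.SpecialLinearGroup

lemma T_eq_modularGroup_T : T = ModularGroup.T := rfl

lemma coe_W_zpow (N : ℕ) (j : ℤ) : ↑(W N ^ j) = !![1, 0; j * N, 1] := by
  induction j using Int.induction_on with
  | zero => simp [one_fin_two]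
  | succ j ih =>
    rw [_root_.zpow_add_one, coe_mul, ih]
    simp [W]
    ring
  | pred j ih =>
    rw [_root_.zpow_sub_one, coe_mul, ih, coe_inv]
    simp [W, adjugate_fin_two]
    ring

lemma W_zpow_mul_T_zpow_mul_apply_one_zero (N : ℕ) (j k : ℤ) (g : SL(2, ℤ)) :
    (W N ^ j * T ^ k * g) 1 0 = g 1 0 + j * (N * (g 0 0 + k * g 1 0)) := by
  simp [coe_W_zpow, T_eq_modularGroup_T, ModularGroup.coe_T_zpow, mul_apply, Fin.sum_univ_two]
  ring

lemma isCoprime_apply_zero_zero_apply_one_zero {R : Type*} [CommRing R] (g : SL(2, R)) :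
    IsCoprime (g 0 0) (g 1 0) :=
  ⟨g 1 1, -g 0 1, by have := g.det_coe; rw [det_fin_two] at this; linear_combination this⟩

section

variable {N : ℕ}

lemma dvd_apply_one_zero_of_mem_Gamma0 {g : SL(2, ℤ)} (hg : g ∈ Gamma0 N) : (N : ℤ) ∣ g 1 0 :=
  (ZMod.intCast_zmod_eq_zero_iff_dvd _ _).1 (Gamma0_mem.1 hg)

lemma T_mem_Gamma0 : T ∈ Gamma0 N := by rw [Gamma0_mem]; simp [T]

lemma W_mem_Gamma0 : W N ∈ Gamma0 N := by rw [Gamma0_mem]; simp [W]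

lemma negI_mem_Gamma0 : negI ∈ Gamma0 N := by rw [Gamma0_mem]; simp [negI]

end

lemma Int.exists_two_mul_natAbs_add_mul_le (a c : ℤ) (hc : c ≠ 0) :
    ∃ k : ℤ, 2 * (a + k * c).natAbs ≤ c.natAbs := by
  obtain ⟨m, hm⟩ := Int.natAbs_dvd.1 (Int.dvd_self_sub_bmod (x := a) (m := c.natAbs))
  have hpos : 0 < c.natAbs := Int.natAbs_pos.2 hc
  have h1 := Int.bmod_le (x := a) hpos
  have h2 := Int.le_bmod (x := a) hpos
  refine ⟨-m, ?_⟩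
  rw [show a + -m * c = a.bmod c.natAbs by linarith]
  omega

lemma exists_natAbs_add_mul_mul_add_mul_lt {N : ℕ} (hN : 2 ≤ N) (hN4 : N ≤ 4) {a c : ℤ}
    (hac : IsCoprime a c) (hNc : (N : ℤ) ∣ c) (hc : c ≠ 0) :
    ∃ k j : ℤ, (c + j * (N * (a + k * c))).natAbs < c.natAbs := by
  obtain ⟨k, hk⟩ := Int.exists_two_mul_natAbs_add_mul_le a c hc
  set a' := a + k * c
  have hac' : IsCoprime a' c := hac.add_mul_right_left k
  have ha' : a' ≠ 0 := by
    intro h0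
    rw [h0, isCoprime_zero_left] at hac'
    have := Int.natAbs_dvd_natAbs.2 hNc
    rw [Int.isUnit_iff_natAbs_eq.1 hac', Int.natAbs_natCast, Nat.dvd_one] at this
    omega
  obtain ⟨j, hj⟩ := Int.exists_two_mul_natAbs_add_mul_le c (N * a') (by positivity)
  rw [Int.natAbs_mul, Int.natAbs_natCast] at hj
  refine ⟨k, j, show (c + j * (N * a')).natAbs < c.natAbs from ?_⟩
  have hsharp : 2 * a'.natAbs < c.natAbs ∨ N < 4 := by
    by_contra! h
    have ha'c : a' ∣ c := Int.natAbs_dvd_natAbs.1 ⟨2, by omega⟩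
    have := Int.isUnit_iff_natAbs_eq.1 (hac'.isUnit_of_dvd' dvd_rfl ha'c)
    obtain rfl : N = 4 := by omega
    obtain ⟨t, rfl⟩ := hNc
    omega
  interval_cases N <;> omega

lemma mem_of_apply_one_zero_eq_zero {H : Subgroup SL(2, ℤ)} (hT : T ∈ H) (hnegI : negI ∈ H)
    {g : SL(2, ℤ)} (hg : g 1 0 = 0) : g ∈ H := by
  have hdet : g 0 0 * g 1 1 = 1 := by
    have := g.det_coe
    rwa [det_fin_two, hg, mul_zero, sub_zero] at this
  rcases Int.eq_one_or_neg_one_of_mul_eq_one' hdet with ⟨ha, hd⟩ | ⟨ha, hd⟩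
  · have : g = T ^ g 0 1 := by
      ext i j
      fin_cases i <;> fin_cases j <;>
        simp [T_eq_modularGroup_T, ModularGroup.coe_T_zpow, ha, hd, hg]
    exact this ▸ zpow_mem hT _
  · have : g = negI * T ^ (-g 0 1) := by
      ext i j
      rw [coe_mul, T_eq_modularGroup_T, ModularGroup.coe_T_zpow]
      fin_cases i <;> fin_cases j <;> simp [negI, ha, hd, hg]
    exact this ▸ mul_mem hnegI (zpow_mem hT _)

lemma Gamma0_le_of_T_mem_of_W_mem_of_negI_mem {N : ℕ} (hN : 2 ≤ N) (hN4 : N ≤ 4)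
    {H : Subgroup SL(2, ℤ)} (hT : T ∈ H) (hW : W N ∈ H) (hnegI : negI ∈ H) : Gamma0 N ≤ H := by
  intro g hg
  induction hn : (g 1 0).natAbs using Nat.strong_induction_on generalizing g with
  | _ n ih =>
  by_cases hc : g 1 0 = 0
  · exact mem_of_apply_one_zero_eq_zero hT hnegI hc
  obtain ⟨k, j, hlt⟩ := exists_natAbs_add_mul_mul_add_mul_lt hN hN4
    (isCoprime_apply_zero_zero_apply_one_zero g) (dvd_apply_one_zero_of_mem_Gamma0 hg) hc
  rw [← W_zpow_mul_T_zpow_mul_apply_one_zero N j k g, hn] at hlt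
  have hh : W N ^ j * T ^ k ∈ H := mul_mem (zpow_mem hW j) (zpow_mem hT k)
  have hhg : W N ^ j * T ^ k * g ∈ H :=
    ih _ hlt (mul_mem (mul_mem (zpow_mem W_mem_Gamma0 j) (zpow_mem T_mem_Gamma0 k)) hg) rfl
  exact (H.mul_mem_cancel_left hh).1 hhg

lemma Gamma0_one_eq_top : Gamma0 1 = ⊤ :=
  eq_top_iff.2 fun _ _ ↦ Gamma0_mem.2 (Subsingleton.elim _ _)

lemma eq_top_of_T_mem_of_W_one_mem {H : Subgroup SL(2, ℤ)} (hT : T ∈ H) (hW : W 1 ∈ H) :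
    H = ⊤ := by
  have hS : ModularGroup.S = T⁻¹ * W 1 * T⁻¹ := by decide
  rw [eq_top_iff, ← SpecialLinearGroup.SL2Z_generators, Subgroup.closure_le]
  rintro _ (rfl | rfl)
  · exact hS ▸ mul_mem (mul_mem (inv_mem hT) hW) (inv_mem hT)
  · exact hT

/-- For `1 ≤ N ≤ 4`, the group `Γ₀(N)` is generated by `T`, `W_N` and `-I`. -/
theorem Gamma0_generated_of_le_four (N : ℕ) (hN : 0 < N) (hN4 : N ≤ 4) :
    Subgroup.closure {T, W N, negI} = Gamma0 N := by
  refine le_antisymm ((Subgroup.closure_le _).2 ?_) ?_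
  · rintro _ (rfl | rfl | rfl)
    exacts [T_mem_Gamma0, W_mem_Gamma0, negI_mem_Gamma0]
  have hT : T ∈ Subgroup.closure {T, W N, negI} := Subgroup.subset_closure (by simp)
  have hW : W N ∈ Subgroup.closure {T, W N, negI} := Subgroup.subset_closure (by simp)
  have hnegI : negI ∈ Subgroup.closure {T, W N, negI} := Subgroup.subset_closure (by simp)
  obtain rfl | hN2 : N = 1 ∨ 2 ≤ N := by omega
  · rw [Gamma0_one_eq_top, eq_top_of_T_mem_of_W_one_mem hT hW]
  · exact Gamma0_le_of_T_mem_of_W_mem_of_negI_mem hN2 hN4 hT hW hnegI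
end
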